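/- arXiv:0902.2185 — 4 statements merged into one kernel-verified Lean document; each statement's English description precedes it below -/
import Mathlib

section
/- Let X be a real random variable and x > 0. Then P(|X| > x) ≤ Σ_{j≥0} V(2^{j+1}x)/(2^{2j}x^2), where V(y) = E[X^2 ; |X| ≤ y]. In particular, the tail probability is controlled by a geometric series of truncated second moments. -/
open MeasureTheory ProbabilityTheory Filter Topology Set

/-- dyadic-annuli tail bound: `P(|X| > x) ≤ ∑_{j≥0} V(2^{j+1}x)/(2^{2j}x²)`
where `V(y) = E[X²; |X| ≤ y]`. -/
theorem tail_le_tsum_truncated_second_moments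
    {Ω : Type*} [MeasurableSpace Ω] (P : Measure Ω) [IsProbabilityMeasure P]
    (X : Ω → ℝ) (hX : Measurable X) (x : ℝ) (hx : 0 < x) :
    P {ω | x < |X ω|} ≤
      ∑' j : ℕ,
        (∫⁻ ω in {ω | |X ω| ≤ 2 ^ (j + 1) * x}, ENNReal.ofReal ((X ω) ^ 2) ∂P) /
          ENNReal.ofReal (2 ^ (2 * j) * x ^ 2) := by
  set A : ℕ → Set Ω := fun j => {ω | 2 ^ j * x < |X ω| ∧ |X ω| ≤ 2 ^ (j + 1) * x} with hA
  have hAm : ∀ j, MeasurableSet (A j) := fun j =>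
    (measurableSet_lt measurable_const hX.abs).inter
      (measurableSet_le hX.abs measurable_const)
  have hsub : {ω | x < |X ω|} ⊆ ⋃ j, A j := by
    intro ω hω
    simp only [mem_setOf_eq] at hω
    have hex : ∃ n : ℕ, |X ω| ≤ 2 ^ (n + 1) * x := by
      obtain ⟨n, hn⟩ := pow_unbounded_of_one_lt (|X ω| / x) (one_lt_two (α := ℝ))
      refine ⟨n, ?_⟩
      rw [div_lt_iff₀ hx] at hn
      rw [pow_succ]
      nlinarith [mul_pos (pow_pos (zero_lt_two (α := ℝ)) n) hx]
    refine mem_iUnion.2 ⟨Nat.find hex, ?_, Nat.find_spec hex⟩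
    rcases Nat.eq_zero_or_pos (Nat.find hex) with h0 | hpos
    · rw [h0]; simpa using hω
    · have hmin := Nat.find_min hex (Nat.sub_lt hpos one_pos)
      have heq : Nat.find hex - 1 + 1 = Nat.find hex := by omega
      rw [heq] at hmin
      exact lt_of_not_ge hmin
  calc P {ω | x < |X ω|} ≤ P (⋃ j, A j) := measure_mono hsub
    _ ≤ ∑' j, P (A j) := measure_iUnion_le _
    _ ≤ _ := by
      refine ENNReal.tsum_le_tsum fun j => ?_
      have hc : ENNReal.ofReal (2 ^ (2 * j) * x ^ 2) ≠ 0 := by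
        refine (ENNReal.ofReal_pos.2 ?_).ne'
        positivity
      rw [ENNReal.le_div_iff_mul_le (Or.inl hc) (Or.inl ENNReal.ofReal_ne_top)]
      calc P (A j) * ENNReal.ofReal (2 ^ (2 * j) * x ^ 2)
          = ∫⁻ _ in A j, ENNReal.ofReal (2 ^ (2 * j) * x ^ 2) ∂P := by
            rw [setLIntegral_const, mul_comm]
        _ ≤ ∫⁻ ω in A j, ENNReal.ofReal ((X ω) ^ 2) ∂P := by
            refine setLIntegral_mono ((hX.pow_const 2).ennreal_ofReal) fun ω hω => ?_
            refine ENNReal.ofReal_le_ofReal ?_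
            have h1 : (2 : ℝ) ^ j * x < |X ω| := hω.1
            have h3 := mul_self_lt_mul_self (by positivity : (0:ℝ) ≤ 2 ^ j * x) h1
            have h4 : |X ω| * |X ω| = X ω ^ 2 := by
              rw [abs_mul_abs_self]; ring
            refine le_of_lt ?_
            calc (2:ℝ) ^ (2 * j) * x ^ 2 = (2 ^ j * x) * (2 ^ j * x) := by
                  rw [pow_mul']; ring
              _ < |X ω| * |X ω| := h3
              _ = X ω ^ 2 := h4
        _ ≤ ∫⁻ ω in {ω | |X ω| ≤ 2 ^ (j + 1) * x}, ENNReal.ofReal ((X ω) ^ 2) ∂P :=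
            lintegral_mono_set fun ω hω => hω.2
end

section
/- Suppose V : (0,∞) → (0,∞) satisfies V(y)/V(x) ≤ C(γ) (y/x)^{2-α+γ} for all y ≥ x > 0, for some constants α ∈ (1,2], γ ∈ (0,α), C(γ) > 0. If additionally V(y) = E[X^2; |X| ≤ y] for a random variable X, then P(|X| > x) ≤ C' V(x)/x^2 for all x > 0, where C' = 4C(γ) Σ_{j≥1} 2^{-(α-γ)j} < ∞. -/
open MeasureTheory ProbabilityTheory Filter Topology Set

/-!
Split the tail `{x < |X|}` into the dyadic shells `2ʲx < |X| ≤ 2ʲ⁺¹x`. By Chebyshev, the shell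
`j` has probability at most `V(2ʲ⁺¹x) / (2ʲx)²`, and the Potter bound turns this into
`4 C(γ) 2^{-(α-γ)(j+1)} V(x) / x²`; summing the geometric series gives the claim.
-/

lemma exists_two_pow_mul_lt_and_le {x t : ℝ} (hx : 0 < x) (hxt : x < t) :
    ∃ j : ℕ, 2 ^ j * x < t ∧ t ≤ 2 ^ (j + 1) * x := by
  obtain ⟨n, hlo, hhi⟩ := exists_mem_Ioc_zpow (div_pos (hx.trans hxt) hx) one_lt_two
  have hn : 0 ≤ n := by
    by_contra! hneg
    have hle : (2 : ℝ) ^ (n + 1) ≤ 1 := zpow_le_one_of_nonpos₀ one_le_two (by omega)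
    have hlt : 1 < t / x := (one_lt_div hx).2 hxt
    linarith
  lift n to ℕ using hn
  refine ⟨n, ?_, ?_⟩
  · rwa [zpow_natCast, lt_div_iff₀ hx] at hlo
  · rwa [← Nat.cast_succ, zpow_natCast, div_le_iff₀ hx] at hhi

lemma summable_two_rpow_neg_mul_succ {s : ℝ} (hs : 0 < s) :
    Summable fun j : ℕ => (2 : ℝ) ^ (-s * ((j : ℝ) + 1)) := by
  have hgeom : Summable fun j : ℕ => ((2 : ℝ) ^ (-s)) ^ (j + 1) :=
    (summable_nat_add_iff 1).mpr <| summable_geometric_of_lt_one (by positivity)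
      (Real.rpow_lt_one_of_one_lt_of_neg one_lt_two (by linarith))
  refine hgeom.congr fun j => ?_
  rw [← Real.rpow_natCast, ← Real.rpow_mul zero_le_two]
  push_cast
  rfl

lemma two_pow_succ_rpow (j : ℕ) (β : ℝ) :
    ((2 : ℝ) ^ (j + 1)) ^ β = 4 * 2 ^ ((β - 2) * ((j : ℝ) + 1)) * ((2 : ℝ) ^ j) ^ 2 := by
  have h4 : (4 : ℝ) = 2 ^ (2 : ℝ) := by norm_num
  rw [← Real.rpow_natCast 2 (j + 1), ← Real.rpow_mul zero_le_two, ← Real.rpow_natCast 2 j,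
    ← Real.rpow_natCast (2 ^ (j : ℝ)) 2, ← Real.rpow_mul zero_le_two, h4,
    ← Real.rpow_add two_pos, ← Real.rpow_add two_pos]
  congr 1
  push_cast
  ring

section TruncatedSecondMoment

variable {Ω : Type*} [MeasurableSpace Ω] {μ : Measure Ω} {X : Ω → ℝ}

lemma integrableOn_sq_of_abs_le [IsFiniteMeasure μ] (hX : Measurable X) (y : ℝ) :
    IntegrableOn (fun ω => X ω ^ 2) {ω | |X ω| ≤ y} μ := by
  refine Measure.integrableOn_of_bounded (M := y ^ 2) (measure_ne_top μ _)
    (hX.pow_const 2).aestronglyMeasurable ?_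
  refine (ae_restrict_iff' (measurableSet_le hX.abs measurable_const)).2 (ae_of_all _ ?_)
  intro ω hω
  rw [Real.norm_eq_abs, abs_of_nonneg (sq_nonneg _), ← sq_abs]
  exact pow_le_pow_left₀ (abs_nonneg _) hω 2

lemma sq_mul_measureReal_le_setIntegral_sq [IsFiniteMeasure μ] (hX : Measurable X)
    {z : ℝ} (hz : 0 ≤ z) (y : ℝ) :
    z ^ 2 * μ.real {ω | z < |X ω| ∧ |X ω| ≤ y} ≤ ∫ ω in {ω | |X ω| ≤ y}, X ω ^ 2 ∂μ := by
  have hshell : MeasurableSet {ω | z < |X ω| ∧ |X ω| ≤ y} :=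
    (measurableSet_lt measurable_const hX.abs).inter (measurableSet_le hX.abs measurable_const)
  have hsub : {ω | z < |X ω| ∧ |X ω| ≤ y} ⊆ {ω | |X ω| ≤ y} := fun ω hω => hω.2
  calc z ^ 2 * μ.real {ω | z < |X ω| ∧ |X ω| ≤ y}
      ≤ ∫ ω in {ω | z < |X ω| ∧ |X ω| ≤ y}, X ω ^ 2 ∂μ := by
        refine setIntegral_ge_of_const_le_real hshell (measure_ne_top μ _) (fun ω hω => ?_)
          ((integrableOn_sq_of_abs_le hX y).mono_set hsub)
        exact (pow_le_pow_left₀ hz hω.1.le 2).trans_eq (sq_abs _)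
    _ ≤ ∫ ω in {ω | |X ω| ≤ y}, X ω ^ 2 ∂μ :=
        setIntegral_mono_set (integrableOn_sq_of_abs_le hX y)
          (ae_of_all _ fun ω => sq_nonneg _) hsub.eventuallyLE

lemma measureReal_lt_abs_le_tsum_of_setIntegral_sq_le [IsFiniteMeasure μ] (hX : Measurable X)
    {x : ℝ} (hx : 0 < x) {b : ℕ → ℝ} (hb : Summable b)
    (hbound : ∀ j : ℕ,
      ∫ ω in {ω | |X ω| ≤ 2 ^ (j + 1) * x}, X ω ^ 2 ∂μ ≤ (2 ^ j * x) ^ 2 * b j) :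
    μ.real {ω | x < |X ω|} ≤ ∑' j, b j := by
  set shell : ℕ → Set Ω := fun j => {ω | 2 ^ j * x < |X ω| ∧ |X ω| ≤ 2 ^ (j + 1) * x}
  have hshell : ∀ j, μ.real (shell j) ≤ b j := fun j => by
    have hpos : 0 < (2 ^ j * x) ^ 2 := by positivity
    rw [← mul_le_mul_iff_right₀ hpos]
    exact (sq_mul_measureReal_le_setIntegral_sq hX (by positivity) _).trans
      (hbound j)
  have hb_nonneg : ∀ j, 0 ≤ b j := fun j => measureReal_nonneg.trans (hshell j)
  have hcover : {ω | x < |X ω|} ⊆ ⋃ j, shell j := fun ω hω =>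
    mem_iUnion.2 (exists_two_pow_mul_lt_and_le hx hω)
  refine ENNReal.toReal_le_of_le_ofReal (tsum_nonneg hb_nonneg) ?_
  calc μ {ω | x < |X ω|} ≤ ∑' j, μ (shell j) := (measure_mono hcover).trans (measure_iUnion_le _)
    _ ≤ ∑' j, ENNReal.ofReal (b j) := ENNReal.tsum_le_tsum fun j =>
        (ENNReal.le_ofReal_iff_toReal_le (measure_ne_top μ _) (hb_nonneg j)).2 (hshell j)
    _ = ENNReal.ofReal (∑' j, b j) := (ENNReal.ofReal_tsum_of_nonneg hb_nonneg hb).symm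

end TruncatedSecondMoment

theorem tail_le_const_mul_truncated_second_moment_general
    {Ω : Type*} [MeasurableSpace Ω] (P : Measure Ω) [IsProbabilityMeasure P]
    (X : Ω → ℝ) (hX : Measurable X)
    (V : ℝ → ℝ) (hV : ∀ y > (0:ℝ), V y = ∫ ω in {ω | |X ω| ≤ y}, (X ω) ^ 2 ∂P)
    (α γ Cγ : ℝ) (hγ : 0 < γ ∧ γ < α)
    (hVpos : ∀ y > (0:ℝ), 0 < V y)
    (hPotter : ∀ x > (0:ℝ), ∀ y, x ≤ y → V y / V x ≤ Cγ * (y / x) ^ (2 - α + γ)) :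
    ∀ x > (0:ℝ),
      (P {ω | x < |X ω|}).toReal ≤
        (4 * Cγ * ∑' j : ℕ, (2:ℝ) ^ (-(α - γ) * ((j:ℝ) + 1))) * V x / x ^ 2 := by
  intro x hx
  set K := 4 * Cγ * V x / x ^ 2
  have hbound : ∀ j : ℕ, ∫ ω in {ω | |X ω| ≤ 2 ^ (j + 1) * x}, X ω ^ 2 ∂P ≤
      (2 ^ j * x) ^ 2 * (K * (2 : ℝ) ^ (-(α - γ) * ((j : ℝ) + 1))) := fun j => by
    have hxy : x ≤ 2 ^ (j + 1) * x := le_mul_of_one_le_left hx.le (one_le_pow₀ one_le_two)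
    have hPotter_j := hPotter x hx _ hxy
    rw [div_le_iff₀ (hVpos x hx), mul_div_cancel_right₀ _ hx.ne', two_pow_succ_rpow] at hPotter_j
    rw [← hV _ (hx.trans_le hxy)]
    refine hPotter_j.trans_eq ?_
    simp only [K, show 2 - α + γ - 2 = -(α - γ) by ring]
    field_simp
  have h := measureReal_lt_abs_le_tsum_of_setIntegral_sq_le hX hx
    ((summable_two_rpow_neg_mul_succ (sub_pos.2 hγ.2)).mul_left K) hbound
  rw [tsum_mul_left] at h
  refine h.trans_eq ?_
  ring

/-- if the truncated second moment `V(y) = E[X²; |X| ≤ y]` is positive and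
satisfies the Potter-type bound `V(y)/V(x) ≤ C(γ)(y/x)^{2-α+γ}` for `y ≥ x > 0`, with
`α ∈ (1,2]`, `γ ∈ (0,α)`, then `P(|X| > x) ≤ C' V(x)/x²` with
`C' = 4 C(γ) ∑_{j≥1} 2^{-(α-γ)j}`. -/
theorem tail_le_const_mul_truncated_second_moment
    {Ω : Type*} [MeasurableSpace Ω] (P : Measure Ω) [IsProbabilityMeasure P]
    (X : Ω → ℝ) (hX : Measurable X)
    (V : ℝ → ℝ) (hV : ∀ y > (0:ℝ), V y = ∫ ω in {ω | |X ω| ≤ y}, (X ω) ^ 2 ∂P)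
    (α γ Cγ : ℝ) (hα : 1 < α ∧ α ≤ 2) (hγ : 0 < γ ∧ γ < α) (hC : 0 < Cγ)
    (hVpos : ∀ y > (0:ℝ), 0 < V y)
    (hPotter : ∀ x > (0:ℝ), ∀ y, x ≤ y → V y / V x ≤ Cγ * (y / x) ^ (2 - α + γ)) :
    ∀ x > (0:ℝ),
      (P {ω | x < |X ω|}).toReal ≤
        (4 * Cγ * ∑' j : ℕ, (2:ℝ) ^ (-(α - γ) * ((j:ℝ) + 1))) * V x / x ^ 2 :=
  tail_le_const_mul_truncated_second_moment_general P X hX V hV α γ Cγ hγ hVpos hPotter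
end

section
/- Let (S_k) be a random walk with i.i.d. steps satisfying the maximal inequality P(max_{k ≤ n} S_k ≥ x) ≤ C n V(x)/x² for all n, x > 0, where V is regularly varying with index 2−α, α ∈ (1,2], and satisfies the Potter bound with exponent 2−α+γ, γ < α−1. Then for any a > 0, N ≥ 1, x > 0: P(sup_{k ≥ N} (S_k − ka) ≥ 0) ≤ C' (1/a) V(aN)/(aN), for a constant C' independent of a, N. -/
open MeasureTheory ProbabilityTheory Filter Topology Set

/-!
Every `k ≥ N` lies in a dyadic block `2^j N ≤ k < 2^(j+1) N`, and there `S_k ≥ k a` forces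
`S_k ≥ 2^j a N`. So the event is covered by the events `max_{k ≤ 2^(j+1) N} S_k ≥ 2^j a N`,
whose probabilities the maximal inequality and the Potter bound control by
`2 C Cγ a⁻¹ V(aN)/(aN) · rʲ` with `r = 2^(1 - α + γ) < 1`; summing the geometric series gives
the claim.
-/

lemma Nat.exists_two_pow_mul_le_lt {N k : ℕ} (hN : 0 < N) (hk : N ≤ k) :
    ∃ j, 2 ^ j * N ≤ k ∧ k < 2 ^ (j + 1) * N := by
  have hkN : k / N ≠ 0 := (Nat.div_pos hk hN).ne'
  refine ⟨Nat.log 2 (k / N), ?_, ?_⟩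
  · exact (Nat.le_div_iff_mul_le hN).mp (Nat.pow_log_le_self 2 hkN)
  · exact (Nat.div_lt_iff_lt_mul hN).mp (Nat.lt_pow_succ_log_self one_lt_two _)

lemma setOf_exists_ge_drift_subset_iUnion {Ω : Type*} (S : ℕ → Ω → ℝ) {a : ℝ} (ha : 0 ≤ a)
    {N : ℕ} (hN : 0 < N) :
    {ω | ∃ k ≥ N, 0 ≤ S k ω - k * a} ⊆
      ⋃ j : ℕ, {ω | ∃ k ≤ 2 ^ (j + 1) * N, (2 : ℝ) ^ j * (a * N) ≤ S k ω} := by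
  rintro ω ⟨k, hk, hSk⟩
  obtain ⟨j, hjk, hkj⟩ := Nat.exists_two_pow_mul_le_lt hN hk
  have hjk' : (2 : ℝ) ^ j * N ≤ k := by exact_mod_cast hjk
  refine mem_iUnion.mpr ⟨j, k, hkj.le, ?_⟩
  nlinarith

lemma measureReal_iUnion_le_tsum {Ω : Type*} [MeasurableSpace Ω] {μ : Measure Ω}
    [IsFiniteMeasure μ] {A : ℕ → Set Ω} (hA : Summable fun j ↦ μ.real (A j)) :
    μ.real (⋃ j, A j) ≤ ∑' j, μ.real (A j) := by
  refine ENNReal.toReal_le_of_le_ofReal (tsum_nonneg fun _ ↦ measureReal_nonneg) ?_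
  calc μ (⋃ j, A j) ≤ ∑' j, μ (A j) := measure_iUnion_le A
    _ = ∑' j, ENNReal.ofReal (μ.real (A j)) :=
      tsum_congr fun _ ↦ (ofReal_measureReal).symm
    _ = ENNReal.ofReal (∑' j, μ.real (A j)) :=
      (ENNReal.ofReal_tsum_of_nonneg (fun _ ↦ measureReal_nonneg) hA).symm

lemma measureReal_iUnion_le_of_le_geometric {Ω : Type*} [MeasurableSpace Ω] {μ : Measure Ω}
    [IsFiniteMeasure μ] {A : ℕ → Set Ω} {K r : ℝ} (hr₀ : 0 ≤ r) (hr₁ : r < 1)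
    (hA : ∀ j, μ.real (A j) ≤ K * r ^ j) :
    μ.real (⋃ j, A j) ≤ K / (1 - r) := by
  have hgeom : Summable fun j ↦ K * r ^ j := (summable_geometric_of_lt_one hr₀ hr₁).mul_left K
  have hsum : Summable fun j ↦ μ.real (A j) :=
    hgeom.of_nonneg_of_le (fun _ ↦ measureReal_nonneg) hA
  calc μ.real (⋃ j, A j)
      ≤ ∑' j, μ.real (A j) := measureReal_iUnion_le_tsum hsum
    _ ≤ ∑' j, K * r ^ j := hsum.tsum_le_tsum hA hgeom
    _ = K / (1 - r) := by rw [tsum_mul_left, tsum_geometric_of_lt_one hr₀ hr₁, div_eq_mul_inv]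

lemma le_mul_rpow_of_potter {V : ℝ → ℝ} {Cγ ρ u t : ℝ} (hu : 0 < u) (hVu : 0 < V u)
    (hPotter : ∀ y, u ≤ y → V y / V u ≤ Cγ * (y / u) ^ ρ) (ht : 1 ≤ t) :
    V (t * u) ≤ Cγ * t ^ ρ * V u := by
  have h := hPotter (t * u) (le_mul_of_one_le_left hu.le ht)
  rwa [mul_div_cancel_right₀ _ hu.ne', div_le_iff₀ hVu] at h

lemma dyadic_maximal_bound_le {V : ℝ → ℝ} {C Cγ ρ u : ℝ} (hC : 0 ≤ C) (hu : 0 < u)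
    (hVu : 0 < V u) (hPotter : ∀ y, u ≤ y → V y / V u ≤ Cγ * (y / u) ^ ρ) (N j : ℕ) :
    C * ((2 ^ (j + 1) * N : ℕ) : ℝ) * V (2 ^ j * u) / (2 ^ j * u) ^ 2 ≤
      2 * C * Cγ * N * V u / u ^ 2 * (2 ^ (ρ - 1)) ^ j := by
  set t : ℝ := 2 ^ j with ht
  have ht₀ : 0 < t := by positivity
  have hV := le_mul_rpow_of_potter hu hVu hPotter (one_le_pow₀ one_le_two : (1 : ℝ) ≤ t)
  have hpow : ((2 : ℝ) ^ (ρ - 1)) ^ j = t ^ ρ / t := by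
    rw [Real.rpow_pow_comm zero_le_two, ← ht, Real.rpow_sub_one ht₀.ne']
  calc C * ((2 ^ (j + 1) * N : ℕ) : ℝ) * V (t * u) / (t * u) ^ 2
      = 2 * C * N / (t * u ^ 2) * V (t * u) := by push_cast [pow_succ, ← ht]; field_simp
    _ ≤ 2 * C * N / (t * u ^ 2) * (Cγ * t ^ ρ * V u) := by gcongr
    _ = 2 * C * Cγ * N * V u / u ^ 2 * (t ^ ρ / t) := by field_simp
    _ = _ := by rw [hpow]

theorem drifted_walk_tail_bound_general
    {Ω : Type*} [MeasurableSpace Ω] (P : Measure Ω) [IsProbabilityMeasure P]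
    (S : ℕ → Ω → ℝ)
    (α γ C Cγ : ℝ) (hγ : 0 < γ ∧ γ < α - 1)
    (hCpos : 0 < C) (hCγ : 0 < Cγ)
    (V : ℝ → ℝ) (hVpos : ∀ x > (0:ℝ), 0 < V x)
    (hPotter : ∀ x > (0:ℝ), ∀ y, x ≤ y → V y / V x ≤ Cγ * (y / x) ^ (2 - α + γ))
    (hmax : ∀ n : ℕ, 1 ≤ n → ∀ x > (0:ℝ),
      (P {ω | ∃ k ≤ n, x ≤ S k ω}).toReal ≤ C * n * V x / x ^ 2) :
    ∃ C' > (0:ℝ), ∀ a > (0:ℝ), ∀ N : ℕ, 1 ≤ N →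
      (P {ω | ∃ k ≥ N, 0 ≤ S k ω - k * a}).toReal ≤
        C' * a⁻¹ * V (a * N) / (a * N) := by
  set r : ℝ := 2 ^ (2 - α + γ - 1)
  have hr₀ : 0 ≤ r := by positivity
  have hr₁ : r < 1 := Real.rpow_lt_one_of_one_lt_of_neg one_lt_two (by linarith [hγ.2])
  have hr : 0 < 1 - r := by linarith
  refine ⟨2 * C * Cγ / (1 - r), by positivity, fun a ha N hN ↦ ?_⟩
  have hN₀ : (0 : ℝ) < N := by exact_mod_cast hN
  have hu : 0 < a * N := mul_pos ha hN₀
  calc P.real {ω | ∃ k ≥ N, 0 ≤ S k ω - k * a}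
      ≤ P.real (⋃ j : ℕ, {ω | ∃ k ≤ 2 ^ (j + 1) * N, (2 : ℝ) ^ j * (a * N) ≤ S k ω}) :=
        measureReal_mono (setOf_exists_ge_drift_subset_iUnion S ha.le hN)
    _ ≤ 2 * C * Cγ * N * V (a * N) / (a * N) ^ 2 / (1 - r) := by
        refine measureReal_iUnion_le_of_le_geometric hr₀ hr₁ fun j ↦ ?_
        refine (hmax _ (Nat.one_le_iff_ne_zero.mpr (by positivity)) _ (by positivity)).trans ?_
        exact dyadic_maximal_bound_le hCpos.le hu (hVpos _ hu) (hPotter _ hu) N j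
    _ = 2 * C * Cγ / (1 - r) * a⁻¹ * V (a * N) / (a * N) := by field_simp

/-- tail maximal bound for the drifted walk. If the random walk satisfies
the maximal inequality `P(max_{k ≤ n} S_k ≥ x) ≤ C n V(x)/x²` where `V` is positive,
regularly varying with index `2 - α`, `α ∈ (1,2]`, and satisfies the Potter bound with
exponent `2 - α + γ`, `γ < α - 1`, then `P(sup_{k ≥ N}(S_k - ka) ≥ 0) ≤ C' a⁻¹ V(aN)/(aN)`
for all `a > 0`, `N ≥ 1`, with `C'` independent of `a` and `N`. -/
theorem drifted_walk_tail_bound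
    {Ω : Type*} [MeasurableSpace Ω] (P : Measure Ω) [IsProbabilityMeasure P]
    (X : ℕ → Ω → ℝ) (hXm : ∀ i, Measurable (X i))
    (hindep : iIndepFun X P)
    (hident : ∀ i, Measure.map (X i) P = Measure.map (X 0) P)
    (S : ℕ → Ω → ℝ) (hS : ∀ k ω, S k ω = ∑ i ∈ Finset.range k, X i ω)
    (α γ C Cγ : ℝ) (hα : 1 < α ∧ α ≤ 2) (hγ : 0 < γ ∧ γ < α - 1)
    (hCpos : 0 < C) (hCγ : 0 < Cγ)
    (V : ℝ → ℝ) (hVpos : ∀ x > (0:ℝ), 0 < V x)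
    (hreg : ∀ l > (0:ℝ), Tendsto (fun x : ℝ => V (l * x) / V x) atTop (𝓝 (l ^ (2 - α))))
    (hPotter : ∀ x > (0:ℝ), ∀ y, x ≤ y → V y / V x ≤ Cγ * (y / x) ^ (2 - α + γ))
    (hmax : ∀ n : ℕ, 1 ≤ n → ∀ x > (0:ℝ),
      (P {ω | ∃ k ≤ n, x ≤ S k ω}).toReal ≤ C * n * V x / x ^ 2) :
    ∃ C' > (0:ℝ), ∀ a > (0:ℝ), ∀ N : ℕ, 1 ≤ N →
      (P {ω | ∃ k ≥ N, 0 ≤ S k ω - k * a}).toReal ≤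
        C' * a⁻¹ * V (a * N) / (a * N) :=
  drifted_walk_tail_bound_general P S α γ C Cγ hγ hCpos hCγ V hVpos hPotter hmax
end

section
/- Let X be a real random variable with E X = 0. Then for every x > 0, E[X; |X| ≤ x] = −E[X; |X| > x], and |E[X; |X| > x]| ≤ Σ_{j=0}^∞ 2^{j+1} x · P(|X| > 2^j x). -/
open MeasureTheory

/-!
The first identity is `E X = 0` split over `{|X| ≤ x}` and its complement. For the bound,
cover `{|X| > x}` by the dyadic annuli `{2^j x < |X| ≤ 2^(j+1) x}`: on the `j`-th annulus
`|X| ≤ 2^(j+1) x`, and the annulus lies inside `{|X| > 2^j x}`.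
-/

theorem exists_pow_mul_lt_le_pow_succ_mul {K : Type*} [Field K] [LinearOrder K]
    [IsStrictOrderedRing K] [Archimedean K] {r x t : K} (hr : 1 < r) (hx : 0 < x)
    (hxt : x < t) : ∃ n : ℕ, r ^ n * x < t ∧ t ≤ r ^ (n + 1) * x := by
  classical
  have h : ∃ n : ℕ, t ≤ r ^ n * x := by
    obtain ⟨n, hn⟩ := pow_unbounded_of_one_lt (t / x) hr
    exact ⟨n, ((div_lt_iff₀ hx).1 hn).le⟩
  have h0 : Nat.find h ≠ 0 := fun h0 => by
    have ht := Nat.find_spec h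
    rw [h0, pow_zero, one_mul] at ht
    exact ht.not_gt hxt
  obtain ⟨n, hn⟩ := Nat.exists_eq_succ_of_ne_zero h0
  refine ⟨n, lt_of_not_ge (Nat.find_min h (by omega)), ?_⟩
  simpa [hn] using Nat.find_spec h

theorem setOf_lt_abs_subset_iUnion_dyadic {Ω : Type*} (X : Ω → ℝ) {x : ℝ} (hx : 0 < x) :
    {ω | x < |X ω|} ⊆ ⋃ j : ℕ, {ω | 2 ^ j * x < |X ω| ∧ |X ω| ≤ 2 ^ (j + 1) * x} := by
  intro ω hω
  simpa using exists_pow_mul_lt_le_pow_succ_mul one_lt_two hx hω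

theorem setLIntegral_enorm_lt_abs_le_tsum_dyadic {Ω : Type*} [MeasurableSpace Ω]
    (μ : Measure Ω) (X : Ω → ℝ) {x : ℝ} (hx : 0 < x) :
    ∫⁻ ω in {ω | x < |X ω|}, ‖X ω‖ₑ ∂μ ≤
      ∑' j : ℕ, ENNReal.ofReal (2 ^ (j + 1) * x) * μ {ω | 2 ^ j * x < |X ω|} := by
  set A : ℕ → Set Ω := fun j => {ω | 2 ^ j * x < |X ω| ∧ |X ω| ≤ 2 ^ (j + 1) * x}
  have hannulus (j : ℕ) : ∫⁻ ω in A j, ‖X ω‖ₑ ∂μ ≤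
      ENNReal.ofReal (2 ^ (j + 1) * x) * μ {ω | 2 ^ j * x < |X ω|} :=
    calc ∫⁻ ω in A j, ‖X ω‖ₑ ∂μ
        ≤ ∫⁻ _ in A j, ENNReal.ofReal (2 ^ (j + 1) * x) ∂μ :=
          setLIntegral_mono measurable_const fun ω hω => by
            rw [Real.enorm_eq_ofReal_abs]
            exact ENNReal.ofReal_le_ofReal hω.2
      _ = ENNReal.ofReal (2 ^ (j + 1) * x) * μ (A j) := setLIntegral_const _ _
      _ ≤ ENNReal.ofReal (2 ^ (j + 1) * x) * μ {ω | 2 ^ j * x < |X ω|} := by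
          gcongr
          exact fun ω hω => hω.1
  calc ∫⁻ ω in {ω | x < |X ω|}, ‖X ω‖ₑ ∂μ
      ≤ ∫⁻ ω in ⋃ j, A j, ‖X ω‖ₑ ∂μ :=
        lintegral_mono_set (setOf_lt_abs_subset_iUnion_dyadic X hx)
    _ ≤ ∑' j, ∫⁻ ω in A j, ‖X ω‖ₑ ∂μ := lintegral_iUnion_le _ _
    _ ≤ _ := ENNReal.tsum_le_tsum hannulus

theorem setIntegral_eq_neg_setIntegral_compl_of_integral_eq_zero {α E : Type*}
    [MeasurableSpace α] [NormedAddCommGroup E] [NormedSpace ℝ E] {μ : Measure α} {f : α → E}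
    {s : Set α} (hs : NullMeasurableSet s μ) (hf : Integrable f μ) (h0 : ∫ a, f a ∂μ = 0) :
    ∫ a in s, f a ∂μ = -∫ a in sᶜ, f a ∂μ :=
  eq_neg_of_add_eq_zero_left ((integral_add_compl₀ hs hf).trans h0)

theorem truncated_mean_dyadic_bound_general
    {Ω : Type*} [MeasurableSpace Ω] (P : Measure Ω)
    (X : Ω → ℝ) (hXint : Integrable X P)
    (hmean : ∫ ω, X ω ∂P = 0) (x : ℝ) (hx : 0 < x) :
    (∫ ω in {ω | |X ω| ≤ x}, X ω ∂P) = -∫ ω in {ω | x < |X ω|}, X ω ∂P ∧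
    ENNReal.ofReal |∫ ω in {ω | x < |X ω|}, X ω ∂P| ≤
      ∑' j : ℕ, ENNReal.ofReal (2 ^ (j + 1) * x) * P {ω | 2 ^ j * x < |X ω|} := by
  have hcompl : {ω | |X ω| ≤ x}ᶜ = {ω | x < |X ω|} := by
    ext ω
    simp
  constructor
  · rw [← hcompl]
    exact setIntegral_eq_neg_setIntegral_compl_of_integral_eq_zero
      (nullMeasurableSet_le hXint.aemeasurable.abs aemeasurable_const) hXint hmean
  · rw [← Real.enorm_eq_ofReal_abs]
    exact (enorm_integral_le_lintegral_enorm _).trans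
      (setLIntegral_enorm_lt_abs_le_tsum_dyadic P X hx)

/-- if `E X = 0` then for every `x > 0`,
`E[X; |X| ≤ x] = -E[X; |X| > x]`, and
`|E[X; |X| > x]| ≤ ∑_{j≥0} 2^{j+1} x · P(|X| > 2^j x)` (dyadic annuli bound, the
right-hand side computed in `ℝ≥0∞`). -/
theorem truncated_mean_dyadic_bound
    {Ω : Type*} [MeasurableSpace Ω] (P : Measure Ω) [IsProbabilityMeasure P]
    (X : Ω → ℝ) (hX : Measurable X) (hXint : Integrable X P)
    (hmean : ∫ ω, X ω ∂P = 0) (x : ℝ) (hx : 0 < x) :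
    (∫ ω in {ω | |X ω| ≤ x}, X ω ∂P) = -∫ ω in {ω | x < |X ω|}, X ω ∂P ∧
    ENNReal.ofReal |∫ ω in {ω | x < |X ω|}, X ω ∂P| ≤
      ∑' j : ℕ, ENNReal.ofReal (2 ^ (j + 1) * x) * P {ω | 2 ^ j * x < |X ω|} :=
  truncated_mean_dyadic_bound_general P X hXint hmean x hx
end
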